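/- If (h,g) ∈ ℂ² satisfies (3h² + 2g)·g = 0 and (h,g) ≠ (0,0), then the fibre F_{(h,g)} of the undeformed DGR moment map is singular: there exists a point x ∈ ℂ⁴ with H(x) = h, G(x) = g at which the gradient vectors ∇H(x) and ∇G(x) are linearly dependent over ℂ (equivalently, all 2×2 minors of the Jacobian matrix of (H,G) vanish at x). -/
import Mathlib


open MvPolynomial

/-- Polynomial ring ℂ[q,Q,p,P]: variable 0 = q, 1 = Q, 2 = p, 3 = P. -/
noncomputable abbrev q : MvPolynomial (Fin 4) ℂ := X 0
noncomputable abbrev Qv : MvPolynomial (Fin 4) ℂ := X 1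
noncomputable abbrev p : MvPolynomial (Fin 4) ℂ := X 2
noncomputable abbrev Pv : MvPolynomial (Fin 4) ℂ := X 3

/-- The undeformed DGR Hamiltonian H. -/
noncomputable def H : MvPolynomial (Fin 4) ℂ :=
  C (1/2 : ℂ) * (p ^ 2 - C (1/3 : ℂ) * Pv ^ 2) + q ^ 3
    - C (3/2 : ℂ) * q * Qv ^ 2 + C (1/2 : ℂ) * Qv ^ 3

/-- The undeformed DGR second integral G. -/
noncomputable def G : MvPolynomial (Fin 4) ℂ :=
  C (1/9 : ℂ) * (p - C (1/2 : ℂ) * Pv) * Pv ^ 3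
    - C (3/2 : ℂ) * Qv ^ 3 * p ^ 2
    - C (3/2 : ℂ) * q * Qv ^ 2 * p * Pv
    - C (3/2 : ℂ) * Qv ^ 3 * p * Pv
    + (-(q ^ 2 * Qv) - q * Qv ^ 2 + C (1/2 : ℂ) * Qv ^ 3) * Pv ^ 2
    - C (3/2 : ℂ) * q ^ 3 * Qv ^ 3 + C (9/8 : ℂ) * q ^ 2 * Qv ^ 4
    + C (9/4 : ℂ) * q * Qv ^ 5 - C (15/8 : ℂ) * Qv ^ 6

/-- The gradient of a polynomial F ∈ ℂ[q,Q,p,P] at a point x ∈ ℂ⁴. -/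
noncomputable def grad (F : MvPolynomial (Fin 4) ℂ) (x : Fin 4 → ℂ) : Fin 4 → ℂ :=
  fun i => eval x (pderiv i F)

/-- If the second vector is a scalar multiple of the first, the pair is
linearly dependent. -/
lemma not_li_of_smul (u v : Fin 4 → ℂ) (c : ℂ) (hv : v = c • u) :
    ¬ LinearIndependent ℂ ![u, v] := by
  intro hli
  have := (Fintype.linearIndependent_iff.mp hli) ![c, -1] ?_ 1
  · simp at this
  · simp [Fin.sum_univ_two, hv]

set_option maxHeartbeats 1600000 in
/-- if (3h² + 2g)·g = 0 and (h,g) ≠ (0,0) then the fibre F_{(h,g)} is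
singular: it contains a point at which the gradients of H and G are linearly
dependent over ℂ. -/
theorem dgr_fibre_singular (h g : ℂ) (hc : (3 * h ^ 2 + 2 * g) * g = 0)
    (hne : (h, g) ≠ (0, 0)) :
    ∃ x : Fin 4 → ℂ, eval x H = h ∧ eval x G = g ∧
      ¬ LinearIndependent ℂ ![grad H x, grad G x] := by
  rcases mul_eq_zero.mp hc with hc | hg
  · -- 3h² + 2g = 0, so g = -(3/2)h². Use the point (0, 0, a, 3a) with a² = -h.
    obtain ⟨a, ha⟩ := IsAlgClosed.exists_pow_nat_eq (-h) (n := 2) (by norm_num)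
    refine ⟨![0, 0, a, 3 * a], ?_, ?_, not_li_of_smul _ _ (3 * a ^ 2) ?_⟩
    · simp [H]; linear_combination (-(1 : ℂ)) * ha
    · simp [G]
      linear_combination (-1/2 : ℂ) * hc + (-3/2 : ℂ) * (a ^ 2 - h) * ha
    · funext i
      fin_cases i <;>
        simp [grad, H, G, Pi.smul_apply, smul_eq_mul] <;> ring
  · -- g = 0. Use the point (0, 0, a, 0) with a² = 2h.
    obtain ⟨a, ha⟩ := IsAlgClosed.exists_pow_nat_eq (2 * h) (n := 2) (by norm_num)
    refine ⟨![0, 0, a, 0], ?_, ?_, not_li_of_smul _ _ 0 ?_⟩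
    · simp [H]; linear_combination (1/2 : ℂ) * ha
    · simp [G, hg]
    · funext i
      fin_cases i <;>
        simp [grad, H, G, Pi.smul_apply, smul_eq_mul]
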